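/- arXiv:1110.3211 — 2 statements merged into one kernel-verified Lean document; each statement's English description precedes it below -/
import Mathlib

section
/- In the Tron game on a tree T, under optimal play Bob's score is at most twice Alice's score. -/
/-!
Alice starts at the middle vertex `c` of a longest path `C`, of length `d`. Whatever vertex Bob
starts from, removing `c` separates him from one of the two halves of `C`, and Alice walks along
that half: since `c` is visited, Bob can never block her, so she scores at least `d / 2 + 1`.
Bob's trail is a path, so he scores at most `d + 1 ≤ 2 * (d / 2 + 1)`.
-/

/-- A state of the Tron game: positions of the two players, the set of
vertices visited so far by either player, and the two scores. -/
structure TronState (V : Type) where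
  posA : V
  posB : V
  visited : Finset V
  scoreA : ℕ
  scoreB : ℕ

/-- A player at `p` is stuck if every vertex it could move to is visited. -/
def TronStuck {V : Type} (R : V → V → Prop) (p : V) (vis : Finset V) : Prop :=
  ∀ w, R p w → w ∈ vis

open Classical in
/-- Bob (second player) can force predicate `P` of the two final scores
(Alice's, Bob's), playing on the (possibly directed) edge relation `R`;
`turn = true` means Alice moves next.  A stuck player passes; the game ends
when both players are stuck. -/
def tronForceB {V : Type} [DecidableEq V] (R : V → V → Prop) (P : ℕ → ℕ → Prop) :
    ℕ → Bool → TronState V → Prop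
  | 0, _, s => P s.scoreA s.scoreB
  | f + 1, true, s =>
      if TronStuck R s.posA s.visited then
        if TronStuck R s.posB s.visited then P s.scoreA s.scoreB
        else tronForceB R P f false s
      else
        ∀ w, R s.posA w → w ∉ s.visited →
          tronForceB R P f false ⟨w, s.posB, insert w s.visited, s.scoreA + 1, s.scoreB⟩
  | f + 1, false, s =>
      if TronStuck R s.posB s.visited then
        if TronStuck R s.posA s.visited then P s.scoreA s.scoreB
        else tronForceB R P f true s
      else
        ∃ w, R s.posB w ∧ w ∉ s.visited ∧
          tronForceB R P f true ⟨s.posA, w, insert w s.visited, s.scoreA, s.scoreB + 1⟩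

open Classical in
/-- Alice (first player) can force predicate `P` of the final scores. -/
def tronForceA {V : Type} [DecidableEq V] (R : V → V → Prop) (P : ℕ → ℕ → Prop) :
    ℕ → Bool → TronState V → Prop
  | 0, _, s => P s.scoreA s.scoreB
  | f + 1, true, s =>
      if TronStuck R s.posA s.visited then
        if TronStuck R s.posB s.visited then P s.scoreA s.scoreB
        else tronForceA R P f false s
      else
        ∃ w, R s.posA w ∧ w ∉ s.visited ∧
          tronForceA R P f false ⟨w, s.posB, insert w s.visited, s.scoreA + 1, s.scoreB⟩
  | f + 1, false, s =>
      if TronStuck R s.posB s.visited then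
        if TronStuck R s.posA s.visited then P s.scoreA s.scoreB
        else tronForceA R P f true s
      else
        ∀ w, R s.posB w → w ∉ s.visited →
          tronForceA R P f true ⟨s.posA, w, insert w s.visited, s.scoreA, s.scoreB + 1⟩

open Classical in
/-- Every complete play of the game satisfies `P` of the final scores. -/
def tronInevitable {V : Type} [DecidableEq V] (R : V → V → Prop) (P : ℕ → ℕ → Prop) :
    ℕ → Bool → TronState V → Prop
  | 0, _, s => P s.scoreA s.scoreB
  | f + 1, true, s =>
      if TronStuck R s.posA s.visited then
        if TronStuck R s.posB s.visited then P s.scoreA s.scoreB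
        else tronInevitable R P f false s
      else
        ∀ w, R s.posA w → w ∉ s.visited →
          tronInevitable R P f false ⟨w, s.posB, insert w s.visited, s.scoreA + 1, s.scoreB⟩
  | f + 1, false, s =>
      if TronStuck R s.posB s.visited then
        if TronStuck R s.posA s.visited then P s.scoreA s.scoreB
        else tronInevitable R P f true s
      else
        ∀ w, R s.posB w → w ∉ s.visited →
          tronInevitable R P f true ⟨s.posA, w, insert w s.visited, s.scoreA, s.scoreB + 1⟩

/-- The initial state once Alice has started at `v` and Bob at `w`:
both vertices are visited, both scores are `1`, and Alice moves first. -/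
def tronInit {V : Type} [DecidableEq V] (v w : V) : TronState V :=
  ⟨v, w, {v, w}, 1, 1⟩

/-- Enough fuel for any Tron game on `V` to finish. -/
def tronFuel (V : Type) [Fintype V] : ℕ := 2 * Fintype.card V + 2

/-- In the Tron game on `G` (Alice picks a start vertex, then Bob picks a
different one, then they alternate, Alice first), Bob can force `P`. -/
def bobCanForce {V : Type} [Fintype V] [DecidableEq V] (G : SimpleGraph V)
    (P : ℕ → ℕ → Prop) : Prop :=
  ∀ v : V, ∃ w, w ≠ v ∧ tronForceB G.Adj P (tronFuel V) true (tronInit v w)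

/-- In the Tron game on `G`, Alice can force `P`. -/
def aliceCanForce {V : Type} [Fintype V] [DecidableEq V] (G : SimpleGraph V)
    (P : ℕ → ℕ → Prop) : Prop :=
  ∃ v : V, ∀ w, w ≠ v → tronForceA G.Adj P (tronFuel V) true (tronInit v w)

namespace SimpleGraph

variable {V : Type} {G : SimpleGraph V}

theorem exists_isPath_forall_length_le [Finite V] [Nonempty V] (G : SimpleGraph V) :
    ∃ (u v : V) (C : G.Walk u v), C.IsPath ∧
      ∀ (x y : V) (q : G.Walk x y), q.IsPath → q.length ≤ C.length := by
  have := Fintype.ofFinite V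
  set S := {n | ∃ (x y : V) (q : G.Walk x y), q.IsPath ∧ q.length = n}
  have hS : BddAbove S :=
    ⟨Fintype.card V, by rintro _ ⟨x, y, q, hq, rfl⟩; exact hq.length_lt.le⟩
  obtain ⟨u, v, C, hC, hlen⟩ : sSup S ∈ S :=
    Nat.sSup_mem ⟨0, Classical.arbitrary V, _, .nil, .nil, rfl⟩ hS
  exact ⟨u, v, C, hC, fun x y q hq => hlen ▸ le_csSup hS ⟨x, y, q, hq, rfl⟩⟩

variable [DecidableEq V]

theorem IsAcyclic.support_subset_of_isPath (hG : G.IsAcyclic) {u v : V} {p : G.Walk u v}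
    (hp : p.IsPath) (q : G.Walk u v) : p.support ⊆ q.support := by
  have hpq : (⟨p, hp⟩ : G.Path u v) = ⟨q.bypass, q.bypass_isPath⟩ :=
    (hG.subsingleton_path u v).elim _ _
  rw [show p = q.bypass from congrArg Subtype.val hpq]
  exact q.support_bypass_subset_support

theorem IsAcyclic.mem_support_of_mem_support_append (hG : G.IsAcyclic) {a b c x y : V}
    {A : G.Walk a c} {B : G.Walk c b} (hAB : (A.append B).IsPath)
    (hx : x ∈ A.support) (hy : y ∈ B.support) (q : G.Walk x y) : c ∈ q.support := by
  set M := (A.dropUntil x hx).append (B.takeUntil y hy)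
  have hsplit : A.append B = (A.takeUntil x hx).append (M.append (B.dropUntil y hy)) := by
    rw [← Walk.append_assoc, Walk.take_spec, Walk.append_assoc, Walk.take_spec]
  rw [hsplit] at hAB
  exact hG.support_subset_of_isPath hAB.of_append_right.of_append_left q
    ((Walk.mem_support_append_iff _ _).mpr (.inl (Walk.end_mem_support _)))

theorem IsAcyclic.exists_isPath_forall_mem_support (hG : G.IsAcyclic) {a b c : V}
    {A : G.Walk a c} {B : G.Walk c b} (hAB : (A.append B).IsPath) (w : V) :
    ∃ (z : V) (P : G.Walk c z), P.IsPath ∧ min A.length B.length ≤ P.length ∧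
      ∀ x ∈ P.support, ∀ q : G.Walk w x, c ∈ q.support := by
  by_cases hA : ∀ x ∈ A.support, ∀ q : G.Walk w x, c ∈ q.support
  · exact ⟨a, A.reverse, hAB.of_append_left.reverse, by simp,
      fun x hx => hA x (by simpa using hx)⟩
  push Not at hA
  obtain ⟨x₁, hx₁, q₁, hq₁⟩ := hA
  refine ⟨b, B, hAB.of_append_right, min_le_right _ _, fun x hx q => ?_⟩
  have := hG.mem_support_of_mem_support_append hAB hx₁ hx (q₁.reverse.append q)
  rw [Walk.mem_support_append_iff, Walk.support_reverse, List.mem_reverse] at this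
  exact this.resolve_left hq₁

end SimpleGraph

namespace TronState

variable {V : Type} [DecidableEq V]

def moveA (s : TronState V) (w : V) : TronState V :=
  ⟨w, s.posB, insert w s.visited, s.scoreA + 1, s.scoreB⟩

def moveB (s : TronState V) (w : V) : TronState V :=
  ⟨s.posA, w, insert w s.visited, s.scoreA, s.scoreB + 1⟩

end TronState

theorem tronForceA_of_invariant {V : Type} [DecidableEq V] {R : V → V → Prop}
    {P : ℕ → ℕ → Prop} (I : ℕ → Bool → TronState V → Prop)
    (stop_of_fuel : ∀ t s, I 0 t s → P s.scoreA s.scoreB)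
    (stop_of_stuck : ∀ f t s, I (f + 1) t s → TronStuck R s.posA s.visited →
      TronStuck R s.posB s.visited → P s.scoreA s.scoreB)
    (pass_A : ∀ f s, I (f + 1) true s → TronStuck R s.posA s.visited → I f false s)
    (pass_B : ∀ f s, I (f + 1) false s → TronStuck R s.posB s.visited → I f true s)
    (move_A : ∀ f s, I (f + 1) true s → ¬ TronStuck R s.posA s.visited →
      ∃ w, R s.posA w ∧ w ∉ s.visited ∧ I f false (s.moveA w))
    (move_B : ∀ f s w, I (f + 1) false s → R s.posB w → w ∉ s.visited →
      I f true (s.moveB w)) :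
    ∀ f t s, I f t s → tronForceA R P f t s := by
  intro f
  induction f with
  | zero => intro t s h; cases t <;> exact stop_of_fuel _ s h
  | succ f ih =>
    rintro (_ | _) s h <;> rw [tronForceA]
    · split_ifs with hB hA
      · exact stop_of_stuck f _ s h hA hB
      · exact ih _ _ (pass_B f s h hB)
      · exact fun w hw hvis => ih _ _ (move_B f s w h hw hvis)
    · split_ifs with hA hB
      · exact stop_of_stuck f _ s h hA hB
      · exact ih _ _ (pass_A f s h hA)
      · obtain ⟨w, hw, hvis, hI⟩ := move_A f s h hA
        exact ⟨w, hw, hvis, ih _ _ hI⟩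

section

open SimpleGraph

variable {V : Type} {G : SimpleGraph V}

def BobTrail (G : SimpleGraph V) (w : V) (s : TronState V) : Prop :=
  ∃ q : G.Walk w s.posB, q.IsPath ∧ s.scoreB = q.length + 1 ∧
    ∀ x ∈ q.support, x ∈ s.visited

theorem BobTrail.scoreB_le {w : V} {s : TronState V} (h : BobTrail G w s) {L : ℕ}
    (hL : ∀ (x y : V) (q : G.Walk x y), q.IsPath → q.length ≤ L) : s.scoreB ≤ L + 1 := by
  obtain ⟨q, hq, hscore, -⟩ := h
  exact hscore ▸ Nat.succ_le_succ (hL _ _ q hq)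

variable [DecidableEq V]

theorem bobTrail_tronInit (v w : V) : BobTrail G w (tronInit v w) :=
  ⟨.nil, .nil, rfl, by simp [tronInit]⟩

theorem BobTrail.moveA {w : V} {s : TronState V} (h : BobTrail G w s) (u : V) :
    BobTrail G w (s.moveA u) := by
  obtain ⟨q, hq, hscore, hvis⟩ := h
  exact ⟨q, hq, hscore, fun x hx => Finset.mem_insert_of_mem (hvis x hx)⟩

theorem BobTrail.moveB {w u : V} {s : TronState V} (h : BobTrail G w s) (hadj : G.Adj s.posB u)
    (hu : u ∉ s.visited) : BobTrail G w (s.moveB u) := by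
  obtain ⟨q, hq, hscore, hvis⟩ := h
  show ∃ q : G.Walk w u, q.IsPath ∧ s.scoreB + 1 = q.length + 1 ∧
    ∀ x ∈ q.support, x ∈ insert u s.visited
  refine ⟨q.concat hadj, hq.concat (fun hmem => hu (hvis u hmem)) hadj, by simp [hscore], ?_⟩
  intro x hx
  rw [Walk.support_concat, List.mem_append, List.mem_singleton] at hx
  rcases hx with hx | rfl
  · exact Finset.mem_insert_of_mem (hvis x hx)
  · exact Finset.mem_insert_self x _

end

section

open SimpleGraph

variable {V : Type} {G : SimpleGraph V} {c : V}

/-- `p` lists Alice's remaining planned moves; Bob is cut off from them by the visited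
vertex `c`. -/
structure AlicePlan (G : SimpleGraph V) (c : V) (s : TronState V) (p : List V) : Prop where
  isChain : (s.posA :: p).IsChain G.Adj
  nodup : p.Nodup
  not_mem_visited : ∀ x ∈ p, x ∉ s.visited
  center_mem_visited : c ∈ s.visited
  posB_ne_center : s.posB ≠ c
  center_mem_support : ∀ x ∈ p, ∀ q : G.Walk s.posB x, c ∈ q.support

namespace AlicePlan

variable {s : TronState V} {p : List V}

theorem eq_nil_of_stuck (h : AlicePlan G c s p) (hstuck : TronStuck G.Adj s.posA s.visited) :
    p = [] := by
  obtain _ | ⟨x, p⟩ := p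
  · rfl
  · have hadj : G.Adj s.posA x := (List.isChain_cons_cons.mp h.isChain).1
    exact absurd (hstuck x hadj) (h.not_mem_visited x List.mem_cons_self)

variable [DecidableEq V]

theorem moveA_cons {x : V} (h : AlicePlan G c s (x :: p)) : AlicePlan G c (s.moveA x) p where
  isChain := (List.isChain_cons_cons.mp h.isChain).2
  nodup := (List.nodup_cons.mp h.nodup).2
  not_mem_visited y hy hvis := by
    rcases Finset.mem_insert.mp hvis with rfl | hvis
    · exact (List.nodup_cons.mp h.nodup).1 hy
    · exact h.not_mem_visited y (List.mem_cons_of_mem x hy) hvis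
  center_mem_visited := Finset.mem_insert_of_mem h.center_mem_visited
  posB_ne_center := h.posB_ne_center
  center_mem_support y hy := h.center_mem_support y (List.mem_cons_of_mem x hy)

theorem moveA_nil (h : AlicePlan G c s []) (u : V) : AlicePlan G c (s.moveA u) [] where
  isChain := List.isChain_singleton _
  nodup := List.nodup_nil
  not_mem_visited _ hx := absurd hx List.not_mem_nil
  center_mem_visited := Finset.mem_insert_of_mem h.center_mem_visited
  posB_ne_center := h.posB_ne_center
  center_mem_support _ hx := absurd hx List.not_mem_nil

theorem moveB (h : AlicePlan G c s p) {u : V} (hadj : G.Adj s.posB u) (hu : u ∉ s.visited) :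
    AlicePlan G c (s.moveB u) p where
  isChain := h.isChain
  nodup := h.nodup
  not_mem_visited x hx hvis := by
    rcases Finset.mem_insert.mp hvis with rfl | hvis
    · have := h.center_mem_support x hx hadj.toWalk
      simp only [Walk.support_cons, Walk.support_nil, List.mem_cons] at this
      rcases this with hc | rfl | hc
      · exact h.posB_ne_center hc.symm
      · exact hu h.center_mem_visited
      · exact List.not_mem_nil hc
    · exact h.not_mem_visited x hx hvis
  center_mem_visited := Finset.mem_insert_of_mem h.center_mem_visited
  posB_ne_center := by rintro rfl; exact hu h.center_mem_visited
  center_mem_support x hx q := by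
    change G.Walk u x at q
    have := h.center_mem_support x hx (q.cons hadj)
    rw [Walk.support_cons, List.mem_cons] at this
    exact this.resolve_left h.posB_ne_center.symm

theorem tronInit_of_isPath {c w z : V} {P : G.Walk c z} (hP : P.IsPath) (hw : w ≠ c)
    (hsep : ∀ x ∈ P.support, ∀ q : G.Walk w x, c ∈ q.support) :
    AlicePlan G c (tronInit c w) P.support.tail where
  isChain := P.cons_tail_support ▸ P.isChain_adj_support
  nodup := hP.support_nodup.tail
  not_mem_visited x hx hvis := by
    have hxc : x ≠ c := fun hxc =>
      (List.nodup_cons.mp (P.cons_tail_support ▸ hP.support_nodup)).1 (hxc ▸ hx)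
    rcases Finset.mem_insert.mp hvis with rfl | hxw
    · exact hxc rfl
    · rw [Finset.mem_singleton] at hxw
      subst hxw
      have hcx : c = x := by simpa using hsep x (List.mem_of_mem_tail hx) .nil
      exact hxc hcx.symm
  center_mem_visited := Finset.mem_insert_self c _
  posB_ne_center := hw
  center_mem_support x hx := hsep x (List.mem_of_mem_tail hx)

end AlicePlan

end

/-- Each of Alice's planned moves uses up two units of fuel: her turn and Bob's next one. -/
theorem tronForceA_of_alicePlan {V : Type} [DecidableEq V] {G : SimpleGraph V} {c w : V}
    {L a : ℕ} (hL : ∀ (x y : V) (q : G.Walk x y), q.IsPath → q.length ≤ L)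
    (ha : L + 1 ≤ 2 * a) :
    ∀ f t s p, BobTrail G w s → AlicePlan G c s p → a ≤ s.scoreA + p.length →
      2 * p.length ≤ f + t.toNat → tronForceA G.Adj (fun a b => b ≤ 2 * a) f t s := by
  suffices ∀ f t s, (BobTrail G w s ∧ ∃ p, AlicePlan G c s p ∧
      a ≤ s.scoreA + p.length ∧ 2 * p.length ≤ f + t.toNat) →
      tronForceA G.Adj (fun a b => b ≤ 2 * a) f t s from
    fun f t s p hB hA hscore hfuel => this f t s ⟨hB, p, hA, hscore, hfuel⟩
  have final (s : TronState V) (hB : BobTrail G w s) (hscore : a ≤ s.scoreA) :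
      s.scoreB ≤ 2 * s.scoreA := by
    have := hB.scoreB_le hL
    omega
  refine tronForceA_of_invariant _ ?_ ?_ ?_ ?_ ?_ ?_
  · rintro t s ⟨hB, p, -, hscore, hfuel⟩
    have : p.length = 0 := by
      cases t <;> simp only [Bool.toNat_true, Bool.toNat_false] at hfuel <;> omega
    exact final s hB (by omega)
  · rintro f t s ⟨hB, p, hA, hscore, -⟩ hstuck -
    obtain rfl := hA.eq_nil_of_stuck hstuck
    exact final s hB hscore
  · rintro f s ⟨hB, p, hA, hscore, -⟩ hstuck
    obtain rfl := hA.eq_nil_of_stuck hstuck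
    exact ⟨hB, [], hA, hscore, by simp⟩
  · rintro f s ⟨hB, p, hA, hscore, hfuel⟩ -
    refine ⟨hB, p, hA, hscore, ?_⟩
    simp only [Bool.toNat_true, Bool.toNat_false] at hfuel ⊢
    omega
  · rintro f s ⟨hB, p, hA, hscore, hfuel⟩ hstuck
    obtain _ | ⟨x, p⟩ := p
    · obtain ⟨u, hu, hvis⟩ : ∃ u, G.Adj s.posA u ∧ u ∉ s.visited := by
        simpa [TronStuck] using hstuck
      refine ⟨u, hu, hvis, hB.moveA u, [], hA.moveA_nil u, ?_, by simp⟩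
      simp only [TronState.moveA, List.length_nil] at hscore ⊢
      omega
    · refine ⟨x, (List.isChain_cons_cons.mp hA.isChain).1,
        hA.not_mem_visited x List.mem_cons_self, hB.moveA x, p, hA.moveA_cons, ?_, ?_⟩
      · simp only [TronState.moveA, List.length_cons] at hscore ⊢
        omega
      · simp only [Bool.toNat_true, Bool.toNat_false, List.length_cons] at hfuel ⊢
        omega
  · rintro f s u ⟨hB, p, hA, hscore, hfuel⟩ hadj hvis
    refine ⟨hB.moveB hadj hvis, p, hA.moveB hadj hvis, hscore, ?_⟩
    simp only [Bool.toNat_true, Bool.toNat_false] at hfuel ⊢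
    omega

theorem tron_tree_bob_at_most_twice_alice_general
    {V : Type} [Fintype V] [DecidableEq V] (T : SimpleGraph V)
    (hconn : T.Connected) (hacyc : T.IsAcyclic) :
    aliceCanForce T (fun a b => b ≤ 2 * a) := by
  have := hconn.nonempty
  obtain ⟨u, v, C, hC, hlongest⟩ := T.exists_isPath_forall_length_le
  set m := C.length / 2
  refine ⟨C.getVert m, fun w hw => ?_⟩
  rw [← C.append_take_drop_eq m] at hC
  obtain ⟨z, P, hP, hlen, hsep⟩ := hacyc.exists_isPath_forall_mem_support hC w
  simp only [SimpleGraph.Walk.take_length, SimpleGraph.Walk.drop_length] at hlen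
  have hPcard := hP.length_lt
  have hplan : P.support.tail.length = P.length := by simp
  refine tronForceA_of_alicePlan hlongest (a := m + 1) (by omega) _ _ _ _
    (bobTrail_tronInit _ _) (AlicePlan.tronInit_of_isPath hP hw hsep) ?_ ?_
  · simp only [tronInit]
    omega
  · simp only [tronFuel, Bool.toNat_true]
    omega

/-- On a tree, under optimal play Bob's score is at most
twice Alice's score: Alice can force this. -/
theorem tron_tree_bob_at_most_twice_alice
    {V : Type} [Fintype V] [DecidableEq V] (T : SimpleGraph V)
    (hconn : T.Connected) (hacyc : T.IsAcyclic) (hcard : 2 ≤ Fintype.card V) :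
    aliceCanForce T (fun a b => b ≤ 2 * a) :=
  tron_tree_bob_at_most_twice_alice_general T hconn hacyc
end

section
/- Let G be a graph on which, under optimal Tron play, Alice's score strictly exceeds Bob's score, and let v be an optimal starting vertex for Alice. Let H = G - v. Then the optimal Tron ratio satisfies (Bob's score + 1)/(Alice's score) on H is at least (Alice's score)/(Bob's score) on G. -/
/-!
After Alice's first move `v → w` the vertex `v` is visited for good, so the rest of the game is
played on `G - v`. Read with the roles exchanged, it is the game on `G - v` in which Alice starts
at Bob's vertex `x` and Bob answers `w`: Bob's score on `G` is Alice's score on `G - v`, and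
Alice's score on `G` is one more than Bob's on `G - v`. So Alice's strategy from `v` becomes a
strategy for Bob on `G - v` turning the ratio `a / b` on `G` into `(b + 1) / a`. Alice can make
that first move because she wins from `v`, whereas a stuck Alice keeps score `1`.
-/

open Finset

theorem Finset.card_compl_insert_add_one {α : Type*} [Fintype α] [DecidableEq α] {s : Finset α}
    {a : α} (ha : a ∉ s) : #(insert a s)ᶜ + 1 = #sᶜ := by
  rw [compl_insert, card_erase_add_one (mem_compl.2 ha)]

def TronState.swap {V : Type} (s : TronState V) : TronState V :=
  ⟨s.posB, s.posA, s.visited, s.scoreB, s.scoreA⟩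

theorem exists_move_of_not_tronStuck {V : Type} {R : V → V → Prop} {p : V} {vis : Finset V}
    (h : ¬ TronStuck R p vis) : ∃ w, R p w ∧ w ∉ vis := by
  simpa [TronStuck] using h

section Play

variable {V : Type} [DecidableEq V] {R : V → V → Prop} {P : ℕ → ℕ → Prop}

theorem tronStuck_insert {p w : V} {vis : Finset V} (h : TronStuck R p vis) :
    TronStuck R p (insert w vis) :=
  fun u hu => mem_insert_of_mem (h u hu)

theorem exists_ge_scoreB_of_tronForceA_of_tronStuck :
    ∀ f b (s : TronState V), TronStuck R s.posA s.visited → tronForceA R P f b s →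
      ∃ c, s.scoreB ≤ c ∧ P s.scoreA c
  | 0, _, s, _, h => ⟨_, le_rfl, h⟩
  | f + 1, true, s, hA, h => by
    rw [tronForceA, if_pos hA] at h
    split_ifs at h
    · exact ⟨_, le_rfl, h⟩
    · exact exists_ge_scoreB_of_tronForceA_of_tronStuck f false s hA h
  | f + 1, false, s, hA, h => by
    rw [tronForceA] at h
    split_ifs at h with hB
    · exact ⟨_, le_rfl, h⟩
    · obtain ⟨w, hw, hwv⟩ := exists_move_of_not_tronStuck hB
      obtain ⟨c, hc, hP⟩ := exists_ge_scoreB_of_tronForceA_of_tronStuck f true _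
        (tronStuck_insert hA) (h w hw hwv)
      exact ⟨c, (Nat.le_succ _).trans hc, hP⟩

theorem tronForceB_mono {Q : ℕ → ℕ → Prop} (hPQ : ∀ a b, P a b → Q a b) :
    ∀ f b (s : TronState V), tronForceB R P f b s → tronForceB R Q f b s
  | 0, _, _ => hPQ _ _
  | f + 1, true, s => by
    rw [tronForceB, tronForceB]
    split_ifs
    · exact hPQ _ _
    · exact tronForceB_mono hPQ f false s
    · exact forall₃_imp fun w _ _ => tronForceB_mono hPQ f false _
  | f + 1, false, s => by
    rw [tronForceB, tronForceB]
    split_ifs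
    · exact hPQ _ _
    · exact tronForceB_mono hPQ f true s
    · exact Exists.imp fun w => And.imp_right <| And.imp_right <| tronForceB_mono hPQ f true _

theorem tronForceA_iff_tronForceB_swap :
    ∀ f b (s : TronState V),
      tronForceA R P f b s ↔ tronForceB R (fun a c => P c a) f (!b) s.swap
  | 0, _, _ => Iff.rfl
  | f + 1, true, s => by
    dsimp only [TronState.swap]
    rw [Bool.not_true, tronForceA, tronForceB]
    split_ifs
    · rfl
    · exact tronForceA_iff_tronForceB_swap f false s
    · exact exists_congr fun w => and_congr_right fun _ => and_congr_right fun _ =>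
        tronForceA_iff_tronForceB_swap f false _
  | f + 1, false, s => by
    dsimp only [TronState.swap]
    rw [Bool.not_false, tronForceA, tronForceB]
    split_ifs
    · rfl
    · exact tronForceA_iff_tronForceB_swap f true s
    · exact forall₃_congr fun w _ _ => tronForceA_iff_tronForceB_swap f true _

theorem tronForceB_add_scoreB_iff (k : ℕ) :
    ∀ f b (s : TronState V), tronForceB R (fun a c => P a (c + k)) f b s ↔
      tronForceB R P f b ⟨s.posA, s.posB, s.visited, s.scoreA, s.scoreB + k⟩
  | 0, _, _ => Iff.rfl
  | f + 1, true, s => by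
    rw [tronForceB, tronForceB]
    split_ifs
    · rfl
    · exact tronForceB_add_scoreB_iff k f false s
    · exact forall₃_congr fun w _ _ => tronForceB_add_scoreB_iff k f false _
  | f + 1, false, s => by
    rw [tronForceB, tronForceB]
    split_ifs
    · rfl
    · exact tronForceB_add_scoreB_iff k f true s
    · refine exists_congr fun w => and_congr_right fun _ => and_congr_right fun _ => ?_
      rw [tronForceB_add_scoreB_iff k f true, Nat.add_right_comm]

theorem tronForceB_iff_of_forall_mem_visited {s : TronState V} (hs : ∀ x, x ∈ s.visited)
    (f : ℕ) (b : Bool) : tronForceB R P f b s ↔ P s.scoreA s.scoreB := by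
  have hstuck : ∀ p, TronStuck R p s.visited := fun _ w _ => hs w
  cases f with
  | zero => rfl
  | succ f => cases b <;> rw [tronForceB, if_pos (hstuck _), if_pos (hstuck _)]

/-- Every move visits a new vertex and a pass is followed by a move, so fuel twice the number of
unvisited vertices already plays the game to its end. -/
theorem tronForceB_succ_iff_of_two_mul_card_compl_le [Fintype V] (f : ℕ) :
    ∀ b (s : TronState V), 2 * #s.visitedᶜ ≤ f →
      (tronForceB R P (f + 1) b s ↔ tronForceB R P f b s) := by
  induction f using Nat.strong_induction_on with | _ f ih => ?_
  intro b s hf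
  match f, hf with
  | 0, hf | 1, hf =>
    have hs : ∀ x, x ∈ s.visited := by
      rw [← eq_univ_iff_forall, ← compl_eq_empty_iff, ← card_eq_zero]
      omega
    rw [tronForceB_iff_of_forall_mem_visited hs, tronForceB_iff_of_forall_mem_visited hs]
  | g + 2, hf =>
    have hmove : ∀ {w}, w ∉ s.visited → 2 * #(insert w s.visited)ᶜ ≤ g := fun hw => by
      have := card_compl_insert_add_one hw
      omega
    cases b
    · rw [tronForceB.eq_3, tronForceB.eq_3]
      split_ifs with hB hA
      · rfl
      · rw [tronForceB.eq_2, tronForceB.eq_2, if_neg hA, if_neg hA]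
        refine forall₃_congr fun w _ hw => ?_
        exact ih g (by omega) false _ (hmove hw)
      · exact exists_congr fun w => and_congr_right fun _ => and_congr_right fun hw =>
          ih (g + 1) (by omega) true _ ((hmove hw).trans g.le_succ)
    · rw [tronForceB.eq_2, tronForceB.eq_2]
      split_ifs with hA hB
      · rfl
      · rw [tronForceB.eq_3, tronForceB.eq_3, if_neg hB, if_neg hB]
        refine exists_congr fun w => and_congr_right fun _ => and_congr_right fun hw => ?_
        exact ih g (by omega) true _ (hmove hw)
      · exact forall₃_congr fun w _ hw => ih (g + 1) (by omega) false _ ((hmove hw).trans g.le_succ)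

end Play

namespace TronState

variable {V : Type} {S : Set V}

/-- `t` is the state `s` of the game on `V`, read as a state of the game on `S`; this requires
every vertex outside `S` to be visited in `s`. -/
structure IsRestriction (t : TronState S) (s : TronState V) : Prop where
  posA : (t.posA : V) = s.posA
  posB : (t.posB : V) = s.posB
  mem_visited_iff : ∀ x, x ∈ s.visited ↔ ∀ hx : x ∈ S, ⟨x, hx⟩ ∈ t.visited
  scoreA : t.scoreA = s.scoreA
  scoreB : t.scoreB = s.scoreB

namespace IsRestriction

variable {t : TronState S} {s : TronState V}

theorem mem_of_notMem_visited (h : t.IsRestriction s) {x : V} (hx : x ∉ s.visited) : x ∈ S := by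
  by_contra hxS
  exact hx ((h.mem_visited_iff x).2 fun hxS' => absurd hxS' hxS)

theorem coe_mem_visited_iff (h : t.IsRestriction s) (x : S) :
    (x : V) ∈ s.visited ↔ x ∈ t.visited :=
  (h.mem_visited_iff x).trans ⟨fun hx => hx x.2, fun hx _ => hx⟩

theorem tronStuck_iff (h : t.IsRestriction s) {R : V → V → Prop} (p : S) :
    TronStuck (fun x y : S => R x y) p t.visited ↔ TronStuck R p s.visited := by
  refine ⟨fun hp w hw => ?_, fun hp w hw => (h.coe_mem_visited_iff w).1 (hp w hw)⟩
  by_contra hws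
  exact hws ((h.coe_mem_visited_iff ⟨w, h.mem_of_notMem_visited hws⟩).2 (hp _ hw))

variable [DecidableEq V]

theorem mem_insert_visited_iff (h : t.IsRestriction s) (w : S) (x : V) :
    x ∈ insert (w : V) s.visited ↔ ∀ hx : x ∈ S, ⟨x, hx⟩ ∈ insert w t.visited := by
  by_cases hxS : x ∈ S <;> simp [h.mem_visited_iff x, Subtype.ext_iff, hxS]

theorem moveA (h : t.IsRestriction s) (w : S) :
    IsRestriction ⟨w, t.posB, insert w t.visited, t.scoreA + 1, t.scoreB⟩
      ⟨w, s.posB, insert (w : V) s.visited, s.scoreA + 1, s.scoreB⟩ :=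
  ⟨rfl, h.posB, h.mem_insert_visited_iff w, congrArg (· + 1) h.scoreA, h.scoreB⟩

theorem moveB (h : t.IsRestriction s) (w : S) :
    IsRestriction ⟨t.posA, w, insert w t.visited, t.scoreA, t.scoreB + 1⟩
      ⟨s.posA, w, insert (w : V) s.visited, s.scoreA, s.scoreB + 1⟩ :=
  ⟨h.posA, rfl, h.mem_insert_visited_iff w, h.scoreA, congrArg (· + 1) h.scoreB⟩

end IsRestriction

end TronState

theorem tronForceB_iff_of_isRestriction {V : Type} [DecidableEq V] {S : Set V}
    {R : V → V → Prop} {P : ℕ → ℕ → Prop} :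
    ∀ f b (t : TronState S) (s : TronState V), t.IsRestriction s →
      (tronForceB (fun x y : S => R x y) P f b t ↔ tronForceB R P f b s)
  | 0, _, t, s, h => by rw [tronForceB, tronForceB, h.scoreA, h.scoreB]
  | f + 1, true, t, s, h => by
    rw [tronForceB, tronForceB, h.tronStuck_iff, h.tronStuck_iff, h.posA, h.posB]
    split_ifs
    · rw [h.scoreA, h.scoreB]
    · exact tronForceB_iff_of_isRestriction f false t s h
    · refine ⟨fun hF w hw hws => ?_, fun hF w hw hwt => ?_⟩
      · have hwS := h.mem_of_notMem_visited hws
        exact (tronForceB_iff_of_isRestriction f false _ _ (h.moveA ⟨w, hwS⟩)).1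
          (hF ⟨w, hwS⟩ hw fun hwt => hws ((h.coe_mem_visited_iff _).2 hwt))
      · exact (tronForceB_iff_of_isRestriction f false _ _ (h.moveA w)).2
          (hF w hw fun hws => hwt ((h.coe_mem_visited_iff w).1 hws))
  | f + 1, false, t, s, h => by
    rw [tronForceB, tronForceB, h.tronStuck_iff, h.tronStuck_iff, h.posA, h.posB]
    split_ifs
    · rw [h.scoreA, h.scoreB]
    · exact tronForceB_iff_of_isRestriction f true t s h
    · refine ⟨fun ⟨w, hw, hwt, hF⟩ => ⟨w, hw, fun hws => hwt ((h.coe_mem_visited_iff w).1 hws),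
          (tronForceB_iff_of_isRestriction f true _ _ (h.moveB w)).1 hF⟩,
        fun ⟨w, hw, hws, hF⟩ => ?_⟩
      have hwS := h.mem_of_notMem_visited hws
      exact ⟨⟨w, hwS⟩, hw, fun hwt => hws ((h.coe_mem_visited_iff _).2 hwt),
        (tronForceB_iff_of_isRestriction f true _ _ (h.moveB ⟨w, hwS⟩)).2 hF⟩

section DeleteVertex

variable {V : Type} [DecidableEq V]

theorem tronFuel_setOf_ne [Fintype V] (v : V) : tronFuel {x : V | x ≠ v} = 2 * Fintype.card V := by
  have := Fintype.card_pos_iff.2 ⟨v⟩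
  rw [tronFuel, Set.card_ne_eq]
  omega

theorem isRestriction_tronInit {v : V} (x w : {x : V | x ≠ v}) :
    (tronInit x w).IsRestriction ⟨x, w, insert (w : V) {v, (x : V)}, 1, 1⟩ := by
  refine ⟨rfl, rfl, fun y => ?_, rfl, rfl⟩
  by_cases hy : y = v <;> simp [tronInit, Subtype.ext_iff, hy, or_comm]

end DeleteVertex

theorem tron_delete_start_vertex_general
    {V : Type} [Fintype V] [DecidableEq V] (G : SimpleGraph V)
    (v : V)
    (hv : ∀ w, w ≠ v → tronForceA G.Adj (fun a b => b < a)
      (tronFuel V) true (tronInit v w)) :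
    ∀ q : ℝ,
      (∀ w, w ≠ v → tronForceA G.Adj (fun a b => q ≤ (a : ℝ) / (b : ℝ))
        (tronFuel V) true (tronInit v w)) →
      bobCanForce (G.induce {x | x ≠ v})
        (fun a b => q ≤ ((b : ℝ) + 1) / (a : ℝ)) := by
  intro q hq x
  have hmove : ¬ TronStuck G.Adj (tronInit v x).posA (tronInit v x).visited := fun hstuck => by
    obtain ⟨c, hc, hlt⟩ := exists_ge_scoreB_of_tronForceA_of_tronStuck _ _ _ hstuck (hv x x.2)
    exact hlt.not_ge hc
  have hfirst := hq x x.2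
  rw [show tronFuel V = 2 * Fintype.card V + 1 + 1 from rfl, tronForceA, if_neg hmove] at hfirst
  obtain ⟨w, -, hw, hF⟩ := hfirst
  have hwv : w ≠ v := by rintro rfl; simp [tronInit] at hw
  refine ⟨⟨w, hwv⟩, by rintro rfl; simp [tronInit] at hw, ?_⟩
  have hswap := (tronForceA_iff_tronForceB_swap _ _ _).1 hF
  have hshift := (tronForceB_add_scoreB_iff 1 _ _ ⟨(x : V), w, _, 1, 1⟩).2 hswap
  have hH := (tronForceB_iff_of_isRestriction _ _ _ _ (isRestriction_tronInit x ⟨w, hwv⟩)).2 hshift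
  rw [tronFuel_setOf_ne, ← tronForceB_succ_iff_of_two_mul_card_compl_le]
  · exact tronForceB_mono (fun a c h => by push_cast at h; exact h) _ _ _ hH
  · have := (card_le_univ (tronInit x ⟨w, hwv⟩).visitedᶜ).trans (Fintype.card_subtype_le _)
    omega

/-- Suppose that on `G` Alice's optimal score strictly
exceeds Bob's and `v` is an optimal starting vertex for her (she wins starting
there).  Let `H = G - v`.  Then any ratio `q ≤ Alice/Bob` that Alice can force
on `G` starting at `v` satisfies `q ≤ (Bob + 1)/Alice` forceable by Bob on `H`. -/
theorem tron_delete_start_vertex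
    {V : Type} [Fintype V] [DecidableEq V] (G : SimpleGraph V)
    (hwin : aliceCanForce G (fun a b => b < a)) (v : V)
    (hv : ∀ w, w ≠ v → tronForceA G.Adj (fun a b => b < a)
      (tronFuel V) true (tronInit v w)) :
    ∀ q : ℝ,
      (∀ w, w ≠ v → tronForceA G.Adj (fun a b => q ≤ (a : ℝ) / (b : ℝ))
        (tronFuel V) true (tronInit v w)) →
      bobCanForce (G.induce {x | x ≠ v})
        (fun a b => q ≤ ((b : ℝ) + 1) / (a : ℝ)) :=
  tron_delete_start_vertex_general G v hv
end
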